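/- Let G = (V, E) be a directed graph with V = {v_1, …, v_n} and |E| = m ≥ 1, and let k ∈ ℕ. Define the Kripke structure K_1 over AP = E ∪ {q} with states E ∪ {q̂}, the single initial state q̂, labeling L_1(q̂) = {q} and L_1(e) = {e} for each e ∈ E, and transitions from q̂ to every edge state e ∈ E and from every edge state e back to q̂. Define the Kripke structure K_2 over the same AP with states E ∪ V, all vertex states v_1, …, v_n initial, labeling L_2(e) = {e} for e ∈ E and L_2(v) = {q} for v ∈ V, and transitions from every vertex state v ∈ V to every edge state e ∈ E, and from every edge state (v_i, v_j) ∈ E to the vertex states v_i and v_j. Then there exists a simulation relation R from K_1 to K_2 that uses at most m + k states of K_2 (i.e., the set {s_2 ∈ E ∪ V : ∃ s_1, (s_1, s_2) ∈ R} has cardinality at most m + k) if and only if G has a vertex cover of size at most k, i.e., a set C ⊆ V with |C| ≤ k such that every edge (v_i, v_j) ∈ E satisfies v_i ∈ C or v_j ∈ C. -/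
import Mathlib


/-- A Kripke structure over state type `S` and atomic propositions `α`:
a nonempty set of initial states, a total transition relation, and a labeling. -/
structure Kripke (S : Type) (α : Type) where
  init : Set S
  init_nonempty : init.Nonempty
  delta : S → S → Prop
  total : ∀ s, ∃ s', delta s s'
  L : S → Set α

/-- A path of a Kripke structure. -/
def Kripke.IsPath {S α : Type} (K : Kripke S α) (p : ℕ → S) : Prop :=
  p 0 ∈ K.init ∧ ∀ i, K.delta (p i) (p (i + 1))

/-- The set of traces of a Kripke structure. -/
def Kripke.Traces {S α : Type} (K : Kripke S α) : Set (ℕ → Set α) :=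
  {t | ∃ p, K.IsPath p ∧ ∀ i, t i = K.L (p i)}

/-- A simulation relation from `K₁` to `K₂`. -/
def IsSimulation {S₁ S₂ α : Type} (K₁ : Kripke S₁ α) (K₂ : Kripke S₂ α)
    (R : S₁ → S₂ → Prop) : Prop :=
  (∀ s₁ ∈ K₁.init, ∃ s₂ ∈ K₂.init, R s₁ s₂) ∧
  (∀ s₁ s₂, R s₁ s₂ → K₁.L s₁ = K₂.L s₂) ∧
  (∀ s₁ s₂, R s₁ s₂ → ∀ s₁', K₁.delta s₁ s₁' → ∃ s₂', K₂.delta s₂ s₂' ∧ R s₁' s₂')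

/-- The Kripke structure `K₁` of the reduction: states are the edge states `E` plus the
extra initial state `q̂` (`Sum.inr ()`), labeled `{q}` (encoded as `{none}`), with
transitions from `q̂` to every edge state and back; edge state `e` is labeled `{e}`.
Atomic propositions `E ∪ {q}` are encoded in `Option (V × V)` with `none` for `q`. -/
def vcK₁ (V : Type) (E : Finset (V × V)) (hm : E.Nonempty) :
    Kripke ({e : V × V // e ∈ E} ⊕ Unit) (Option (V × V)) where
  init := {Sum.inr ()}
  init_nonempty := ⟨Sum.inr (), rfl⟩
  delta a b :=
    (a = Sum.inr () ∧ ∃ e, b = Sum.inl e) ∨ ((∃ e, a = Sum.inl e) ∧ b = Sum.inr ())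
  total := by
    rintro (e | u)
    · exact ⟨Sum.inr (), Or.inr ⟨⟨e, rfl⟩, rfl⟩⟩
    · obtain ⟨e, he⟩ := hm
      exact ⟨Sum.inl ⟨e, he⟩, Or.inl ⟨rfl, ⟨e, he⟩, rfl⟩⟩
  L a :=
    match a with
    | Sum.inl e => {some e.val}
    | Sum.inr _ => {none}

/-- The Kripke structure `K₂` of the reduction: states are the edge states `E` plus all
vertex states `V`, all vertex states initial and labeled `{q}` (encoded `{none}`);
every vertex state moves to every edge state, and edge state `(vᵢ, vⱼ)` moves to the
vertex states `vᵢ` and `vⱼ`. -/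
def vcK₂ (V : Type) (E : Finset (V × V)) (hm : E.Nonempty) :
    Kripke ({e : V × V // e ∈ E} ⊕ V) (Option (V × V)) where
  init := {s | ∃ v, s = Sum.inr v}
  init_nonempty := by
    obtain ⟨e, he⟩ := hm
    exact ⟨Sum.inr e.1, e.1, rfl⟩
  delta a b :=
    ((∃ v, a = Sum.inr v) ∧ ∃ e, b = Sum.inl e) ∨
    (∃ (e : {e : V × V // e ∈ E}) (v : V), a = Sum.inl e ∧ b = Sum.inr v ∧
      (v = e.val.1 ∨ v = e.val.2))
  total := by
    rintro (e | u)
    · exact ⟨Sum.inr e.val.1, Or.inr ⟨e, e.val.1, rfl, rfl, Or.inl rfl⟩⟩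
    · obtain ⟨e, he⟩ := hm
      exact ⟨Sum.inl ⟨e, he⟩, Or.inl ⟨⟨u, rfl⟩, ⟨e, he⟩, rfl⟩⟩
  L a :=
    match a with
    | Sum.inl e => {some e.val}
    | Sum.inr _ => {none}

/-- Correctness of the reduction from Vertex Cover: there is a simulation relation from
`K₁` to `K₂` using at most `m + k` states of `K₂` iff the directed graph `G = (V, E)`
(with `m = |E| ≥ 1` edges) has a vertex cover of size at most `k`. -/
theorem bounded_simulation_iff_vertex_cover {V : Type} [Fintype V] [DecidableEq V]
    (E : Finset (V × V)) (hm : E.Nonempty) (k : ℕ) :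
    (∃ R : ({e : V × V // e ∈ E} ⊕ Unit) → ({e : V × V // e ∈ E} ⊕ V) → Prop,
      IsSimulation (vcK₁ V E hm) (vcK₂ V E hm) R ∧
      {s₂ | ∃ s₁, R s₁ s₂}.ncard ≤ E.card + k) ↔
    (∃ C : Finset V, C.card ≤ k ∧ ∀ e ∈ E, e.1 ∈ C ∨ e.2 ∈ C) := by
  constructor
  · rintro ⟨R, ⟨h1, h2, h3⟩, hcard⟩
    set U : Set ({e : V × V // e ∈ E} ⊕ V) := {s₂ | ∃ s₁, R s₁ s₂} with hU
    -- every edge state is related to itself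
    have hedge : ∀ ε : {e : V × V // e ∈ E}, R (Sum.inl ε) (Sum.inl ε) := by
      intro ε
      obtain ⟨s₂, hs₂init, hR⟩ := h1 (Sum.inr ()) rfl
      obtain ⟨s₂', hδ, hR'⟩ := h3 _ _ hR (Sum.inl ε) (Or.inl ⟨rfl, ε, rfl⟩)
      rcases s₂' with ε' | v
      · have hlab := h2 _ _ hR'
        have heq : (some ε.val : Option (V × V)) = some ε'.val := by
          simpa [vcK₁, vcK₂, Set.singleton_eq_singleton_iff] using hlab
        obtain rfl : ε = ε' := Subtype.ext (Option.some_injective _ heq)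
        exact hR'
      · have hlab := h2 _ _ hR'
        simp [vcK₁, vcK₂, Set.singleton_eq_singleton_iff] at hlab
    -- for every edge some covering vertex state is used
    have hcover : ∀ ε : {e : V × V // e ∈ E},
        ∃ v, (v = ε.val.1 ∨ v = ε.val.2) ∧ (Sum.inr v : {e : V × V // e ∈ E} ⊕ V) ∈ U := by
      intro ε
      obtain ⟨s₂', hδ, hR'⟩ := h3 _ _ (hedge ε) (Sum.inr ()) (Or.inr ⟨⟨ε, rfl⟩, rfl⟩)
      rcases hδ with ⟨⟨v, hv⟩, _⟩ | ⟨e', v, he', hb, hv⟩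
      · simp at hv
      · obtain rfl : ε = e' := by simpa using he'
        subst hb
        exact ⟨v, hv, ⟨Sum.inr (), hR'⟩⟩
    -- the candidate cover
    have hfin : ({v : V | (Sum.inr v : {e : V × V // e ∈ E} ⊕ V) ∈ U}).Finite :=
      Set.toFinite _
    refine ⟨hfin.toFinset, ?_, ?_⟩
    · -- cardinality bound
      have hsub : (Sum.inl '' Set.univ ∪
          Sum.inr '' {v : V | (Sum.inr v : {e : V × V // e ∈ E} ⊕ V) ∈ U}) ⊆ U := by
        rintro s (⟨ε, -, rfl⟩ | ⟨v, hv, rfl⟩)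
        · exact ⟨Sum.inl ε, hedge ε⟩
        · exact hv
      have hdisj : Disjoint (Sum.inl '' (Set.univ : Set {e : V × V // e ∈ E}))
          (Sum.inr '' {v : V | (Sum.inr v : {e : V × V // e ∈ E} ⊕ V) ∈ U}) := by
        rw [Set.disjoint_left]
        rintro s ⟨ε, -, rfl⟩ ⟨v, -, h⟩
        simp at h
      have h1c : ((Sum.inl '' (Set.univ : Set {e : V × V // e ∈ E}) :
          Set ({e : V × V // e ∈ E} ⊕ V))).ncard = E.card := by
        rw [Set.ncard_image_of_injective _ Sum.inl_injective, Set.ncard_univ,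
          Nat.card_eq_fintype_card, Fintype.card_coe]
      have h2c : ((Sum.inr '' {v : V | (Sum.inr v : {e : V × V // e ∈ E} ⊕ V) ∈ U} :
          Set ({e : V × V // e ∈ E} ⊕ V))).ncard
          = hfin.toFinset.card := by
        rw [Set.ncard_image_of_injective _ Sum.inr_injective,
          Set.ncard_eq_toFinset_card _ hfin]
      have := Set.ncard_le_ncard hsub (Set.toFinite _)
      rw [Set.ncard_union_eq hdisj (Set.toFinite _) (Set.toFinite _), h1c, h2c] at this
      omega
    · intro e he
      obtain ⟨v, hv, hvU⟩ := hcover ⟨e, he⟩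
      rcases hv with rfl | rfl
      · exact Or.inl (by simpa using hvU)
      · exact Or.inr (by simpa using hvU)
  · rintro ⟨C, hCk, hCcov⟩
    -- a cover vertex exists
    obtain ⟨e₀, he₀⟩ := hm
    have hv₀ : ∃ v ∈ C, True := by
      rcases hCcov e₀ he₀ with h | h
      exacts [⟨e₀.1, h, trivial⟩, ⟨e₀.2, h, trivial⟩]
    obtain ⟨v₀, hv₀C, -⟩ := hv₀
    refine ⟨fun s₁ s₂ => (∃ ε, s₁ = Sum.inl ε ∧ s₂ = Sum.inl ε) ∨
      (s₁ = Sum.inr () ∧ ∃ v ∈ C, s₂ = Sum.inr v), ⟨?_, ?_, ?_⟩, ?_⟩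
    · rintro s₁ rfl
      exact ⟨Sum.inr v₀, ⟨v₀, rfl⟩, Or.inr ⟨rfl, v₀, hv₀C, rfl⟩⟩
    · rintro s₁ s₂ (⟨ε, rfl, rfl⟩ | ⟨rfl, v, -, rfl⟩) <;> rfl
    · rintro s₁ s₂ (⟨ε, rfl, rfl⟩ | ⟨rfl, v, hvC, rfl⟩) s₁' hδ
      · rcases hδ with ⟨h, -⟩ | ⟨-, rfl⟩
        · simp at h
        · rcases hCcov ε.val ε.2 with h | h
          · exact ⟨Sum.inr ε.val.1, Or.inr ⟨ε, ε.val.1, rfl, rfl, Or.inl rfl⟩,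
              Or.inr ⟨rfl, ε.val.1, h, rfl⟩⟩
          · exact ⟨Sum.inr ε.val.2, Or.inr ⟨ε, ε.val.2, rfl, rfl, Or.inr rfl⟩,
              Or.inr ⟨rfl, ε.val.2, h, rfl⟩⟩
      · rcases hδ with ⟨-, ε, rfl⟩ | ⟨⟨ε, h⟩, -⟩
        · exact ⟨Sum.inl ε, Or.inl ⟨⟨v, rfl⟩, ε, rfl⟩, Or.inl ⟨ε, rfl, rfl⟩⟩
        · simp at h
    · -- cardinality
      have hsub : {s₂ : {e : V × V // e ∈ E} ⊕ V |
          ∃ s₁ : {e : V × V // e ∈ E} ⊕ Unit, (∃ ε, s₁ = Sum.inl ε ∧ s₂ = Sum.inl ε) ∨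
          (s₁ = Sum.inr () ∧ ∃ v ∈ C, s₂ = Sum.inr v)} ⊆
          Sum.inl '' Set.univ ∪ Sum.inr '' (↑C : Set V) := by
        rintro s ⟨s₁, ⟨ε, rfl, rfl⟩ | ⟨rfl, v, hvC, rfl⟩⟩
        · exact Or.inl ⟨ε, trivial, rfl⟩
        · exact Or.inr ⟨v, hvC, rfl⟩
      calc _ ≤ (Sum.inl '' Set.univ ∪ Sum.inr '' (↑C : Set V)).ncard :=
              Set.ncard_le_ncard hsub (Set.toFinite _)
        _ ≤ ((Sum.inl '' (Set.univ : Set {e : V × V // e ∈ E}) :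
                Set ({e : V × V // e ∈ E} ⊕ V))).ncard
              + ((Sum.inr '' (↑C : Set V) : Set ({e : V × V // e ∈ E} ⊕ V))).ncard :=
              Set.ncard_union_le _ _
        _ ≤ E.card + k := by
            rw [Set.ncard_image_of_injective _ Sum.inl_injective,
              Set.ncard_image_of_injective _ Sum.inr_injective, Set.ncard_univ,
              Nat.card_eq_fintype_card, Fintype.card_coe, Set.ncard_coe_finset]
            omega
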